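/- arXiv:1602.08238 — 11 statements merged into one kernel-verified Lean document; each statement's English description precedes it below -/
import Mathlib

section
/- For every odd natural number m and every w ≥ 1, the map x ↦ T_m(x) mod 2^w is a bijection on ℤ/2^wℤ. -/
/-!
The recurrence gives `T (n + 2) = T n + 2 (X T (n + 1) - T n)`, so for odd `n` the polynomial
`T n` is `X` plus twice a polynomial, over any commutative ring. In `ℤ/2^wℤ` the element `2` is
nilpotent, and a polynomial map `x ↦ x + a Q(x)` with `a` nilpotent is injective: if the values at
`x` and `y` agree then `(x - y)(1 + a q) = 0` for some `q`, and `1 + a q` is a unit.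
-/

open Polynomial Polynomial.Chebyshev

theorem Polynomial.injective_eval_X_add_smul {R : Type*} [CommRing R] {a : R}
    (ha : IsNilpotent a) (Q : R[X]) : Function.Injective fun x => (X + a • Q).eval x := by
  intro x y hxy
  obtain ⟨q, hq⟩ := sub_dvd_eval_sub x y Q
  simp only [eval_add, eval_smul, eval_X, smul_eq_mul] at hxy
  have hunit : IsUnit (1 + a * q) := ((Commute.all a q).isNilpotent_mul_right ha).isUnit_one_add
  have hzero : (1 + a * q) * (x - y) = 0 := by linear_combination hxy - a * hq
  exact sub_eq_zero.mp (hunit.mul_right_eq_zero.mp hzero)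

theorem Polynomial.Chebyshev.exists_T_eq_X_add_two_smul (R : Type*) [CommRing R] {n : ℤ}
    (hn : Odd n) : ∃ Q : R[X], T R n = X + (2 : R) • Q := by
  simp only [smul_eq_C_mul, Polynomial.C_ofNat]
  obtain ⟨k, rfl⟩ := hn
  induction k using Int.induction_on with
  | zero => exact ⟨0, by simp⟩
  | succ k ih =>
    obtain ⟨Q, hQ⟩ := ih
    refine ⟨Q + X * T R (2 * k + 1 + 1) - T R (2 * k + 1), ?_⟩
    rw [show 2 * ((k : ℤ) + 1) + 1 = 2 * k + 1 + 2 by ring, T_add_two]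
    linear_combination hQ
  | pred k ih =>
    obtain ⟨Q, hQ⟩ := ih
    refine ⟨Q + X * T R (2 * -k + 1 - 1) - T R (2 * -k + 1), ?_⟩
    rw [show 2 * (-(k : ℤ) - 1) + 1 = 2 * -k + 1 - 2 by ring, T_sub_two]
    linear_combination hQ

theorem ZMod.isNilpotent_natCast_pow (p w : ℕ) : IsNilpotent (p : ZMod (p ^ w)) :=
  ⟨w, by exact_mod_cast ZMod.natCast_self (p ^ w)⟩

theorem chebyshev_odd_bijective_general (m w : ℕ) (hm : Odd m) :
    Function.Bijective
      (fun x : ZMod (2 ^ w) => (Polynomial.Chebyshev.T (ZMod (2 ^ w)) (m : ℤ)).eval x) := by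
  have : NeZero (2 ^ w) := ⟨by positivity⟩
  rw [← Finite.injective_iff_bijective]
  obtain ⟨Q, hQ⟩ := exists_T_eq_X_add_two_smul (ZMod (2 ^ w)) ((Int.odd_coe_nat m).mpr hm)
  rw [hQ]
  exact injective_eval_X_add_smul (by exact_mod_cast ZMod.isNilpotent_natCast_pow 2 w) Q

/-- For every odd natural number `m` and every `w ≥ 1`, the map `x ↦ T_m(x)` is a
bijection on `ℤ/2^wℤ`. -/
theorem chebyshev_odd_bijective (m w : ℕ) (hm : Odd m) (hw : 1 ≤ w) :
    Function.Bijective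
      (fun x : ZMod (2 ^ w) => (Polynomial.Chebyshev.T (ZMod (2 ^ w)) (m : ℤ)).eval x) :=
  chebyshev_odd_bijective_general m w hm
end

section
/- Let X₁ = (2A−1)·2^{k} ± 1 with A, k natural numbers and k ≥ 2. Then for every natural number r ≥ 2, T_{2^r}(X₁) ≡ 1 (mod 2^{k+r+2}). -/
open Polynomial Polynomial.Chebyshev

lemma cheb_step_lemma (s : ℕ) (ε : ℤ) (hε : ε = 1 ∨ ε = -1) (y : ℤ)
    (h : y ≡ ε [ZMOD (2:ℤ)^(s+1)]) : 2*y^2 - 1 ≡ 1 [ZMOD (2:ℤ)^(s+3)] := by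
  obtain ⟨t, ht⟩ := h.dvd
  have hy : y = ε - 2^(s+1)*t := by linarith
  subst hy
  refine Int.ModEq.symm (Int.modEq_iff_dvd.mpr ⟨-(ε*t) + 2^s*t^2, ?_⟩)
  rcases hε with rfl | rfl <;> ring

/-- Let `X₁ = (2A−1)·2^k ± 1` with `A ≥ 1`, `k ≥ 2`. Then for every `r ≥ 2`,
`T_{2^r}(X₁) ≡ 1 (mod 2^{k+r+2})`. -/
theorem chebyshev_two_pow_at_X1 (A k : ℕ) (hA : 1 ≤ A) (hk : 2 ≤ k)
    (ε : ℤ) (hε : ε = 1 ∨ ε = -1) (r : ℕ) (hr : 2 ≤ r) :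
    (Polynomial.Chebyshev.T ℤ ((2 : ℤ) ^ r)).eval ((2 * (A : ℤ) - 1) * 2 ^ k + ε) ≡ 1
      [ZMOD 2 ^ (k + r + 2)] := by
  obtain ⟨k', rfl⟩ : ∃ k', k = k' + 1 := ⟨k - 1, by omega⟩
  obtain ⟨r', rfl⟩ : ∃ r', r = r' + 1 := ⟨r - 1, by omega⟩
  set X : ℤ := (2 * (A : ℤ) - 1) * 2 ^ (k' + 1) + ε with hX
  have base : X ≡ ε [ZMOD (2:ℤ)^(k'+1)] :=
    Int.modEq_iff_dvd.mpr ⟨-(2*(A:ℤ)-1), by rw [hX]; ring⟩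
  have key : ∀ j : ℕ, (T ℤ ((2:ℤ)^(j+1))).eval X ≡ 1 [ZMOD (2:ℤ)^(k'+2*j+3)] := by
    intro j
    induction j with
    | zero =>
      have h := cheb_step_lemma k' ε hε X base
      have e : k' + 2*0 + 3 = k' + 3 := by ring
      rw [e]
      simpa [T_two] using h
    | succ n ih =>
      have hcomp : T ℤ ((2:ℤ)^(n+1+1)) = (T ℤ 2).comp (T ℤ ((2:ℤ)^(n+1))) := by
        rw [← T_mul]; ring_nf
      rw [hcomp, Polynomial.eval_comp]
      have e : k' + 2*n + 3 = (k' + 2*n + 2) + 1 := by ring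
      rw [e] at ih
      have h := cheb_step_lemma (k' + 2*n + 2) 1 (Or.inl rfl) _ ih
      have e2 : k' + 2*(n+1) + 3 = (k' + 2*n + 2) + 3 := by ring
      rw [e2]
      simpa [T_two] using h
  have h := key r'
  have hd : (2:ℤ) ^ (k' + 1 + (r' + 1) + 2) ∣ (2:ℤ) ^ (k' + 2*r' + 3) :=
    pow_dvd_pow 2 (by omega)
  exact (key r').of_dvd hd
end

section
/- Let X₂ = (2A−1)·2^{k} with A, k natural numbers, k ≥ 1. Then for every natural number r ≥ 2, T_{2^r}(X₂) ≡ 1 (mod 2^{k+r+2}). -/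
/-!
Only the power of `2` dividing `x` matters. Directly, `T₄(x) - 1 = 8x²(x² - 1)` is divisible by
`2^(2k+3)` when `2^k ∣ x`, and each doubling `T_{2n} = 2 T_n² - 1` gains one more factor `2`,
since `2y² - 2 = 2(y - 1)(y + 1)`. Hence `T_{2^r}(x) ≡ 1 [ZMOD 2^(2k+r+1)]`, and
`2k + r + 1 ≥ k + r + 2` once `k ≥ 1`.
-/

open Polynomial Polynomial.Chebyshev

theorem Int.two_mul_sq_sub_one_modEq_one {y n : ℤ} (h : y ≡ 1 [ZMOD n]) :
    2 * y ^ 2 - 1 ≡ 1 [ZMOD 2 * n] := by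
  have hdvd : n ∣ 1 - y := Int.modEq_iff_dvd.mp h
  refine Int.modEq_iff_dvd.mpr ?_
  rw [show 1 - (2 * y ^ 2 - 1) = 2 * ((1 - y) * (1 + y)) by ring]
  exact mul_dvd_mul_left 2 (hdvd.mul_right _)

theorem Polynomial.Chebyshev.eval_T_two_mul {R : Type*} [CommRing R] (n : ℤ) (x : R) :
    (T R (2 * n)).eval x = 2 * (T R n).eval x ^ 2 - 1 := by
  rw [T_mul, eval_comp, T_two]
  simp

theorem Polynomial.Chebyshev.eval_T_four_modEq_one {x : ℤ} {k : ℕ} (hx : 2 ^ k ∣ x) :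
    (T ℤ 4).eval x ≡ 1 [ZMOD 2 ^ (2 * k + 3)] := by
  have hx2 : (2 : ℤ) ^ (2 * k) ∣ x ^ 2 := by
    rw [pow_mul']
    exact pow_dvd_pow_of_dvd hx 2
  refine Int.modEq_iff_dvd.mpr ?_
  rw [show (4 : ℤ) = 2 * 2 by norm_num, eval_T_two_mul, T_two, pow_add,
    show 1 - (2 * eval x (2 * X ^ 2 - 1 : ℤ[X]) ^ 2 - 1) = x ^ 2 * (8 * (1 - x ^ 2)) by
      simp only [eval_sub, eval_mul, eval_ofNat, eval_pow, eval_X, eval_one]; ring]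
  exact mul_dvd_mul hx2 (dvd_mul_right _ _)

theorem Polynomial.Chebyshev.eval_T_two_pow_modEq_one {x : ℤ} {k : ℕ} (hx : 2 ^ k ∣ x)
    {r : ℕ} (hr : 2 ≤ r) :
    (T ℤ (2 ^ r)).eval x ≡ 1 [ZMOD 2 ^ (2 * k + r + 1)] := by
  induction r, hr using Nat.le_induction with
  | base => simpa using eval_T_four_modEq_one hx
  | succ n _ ih =>
    rw [pow_succ' (2 : ℤ) n, eval_T_two_mul,
      show 2 * k + (n + 1) + 1 = (2 * k + n + 1) + 1 by ring, pow_succ']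
    exact Int.two_mul_sq_sub_one_modEq_one ih

theorem chebyshev_two_pow_at_X2_general (A k : ℕ) (hk : 1 ≤ k)
    (r : ℕ) (hr : 2 ≤ r) :
    (Polynomial.Chebyshev.T ℤ ((2 : ℤ) ^ r)).eval ((2 * (A : ℤ) - 1) * 2 ^ k) ≡ 1
      [ZMOD 2 ^ (k + r + 2)] :=
  (eval_T_two_pow_modEq_one (dvd_mul_left _ _) hr).of_dvd (pow_dvd_pow 2 (by omega))

/-- Let `X₂ = (2A−1)·2^k` with `A ≥ 1`, `k ≥ 1`. Then for every `r ≥ 2`,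
`T_{2^r}(X₂) ≡ 1 (mod 2^{k+r+2})`. -/
theorem chebyshev_two_pow_at_X2 (A k : ℕ) (hA : 1 ≤ A) (hk : 1 ≤ k)
    (r : ℕ) (hr : 2 ≤ r) :
    (Polynomial.Chebyshev.T ℤ ((2 : ℤ) ^ r)).eval ((2 * (A : ℤ) - 1) * 2 ^ k) ≡ 1
      [ZMOD 2 ^ (k + r + 2)] :=
  chebyshev_two_pow_at_X2_general A k hk r hr
end

section
/- Let X₁ = (2A−1)·2^{k} ± 1 with A, k natural numbers and k ≥ 2. Then for every natural number r ≥ 2, T_{2^r+1}(X₁) ≡ X₁ + 2^{k+r+1} (mod 2^{k+r+2}), and likewise T_{2^r−1}(X₁) ≡ X₁ + 2^{k+r+1} (mod 2^{k+r+2}). -/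
/-!
Put `P_r = T_{2^r}(x)` and, for `δ = ±1`, `G_r = T_{2^r+δ}(x) - x P_r`. The product formula
`2 T_m T_n = T_{m+n} + T_{m-n}` gives `G_{r+1} = 2 P_r G_r` with `G_0 = ±(x² - 1)`. For odd `x`
every `P_r` is odd, so the 2-adic valuation of `G_r` is that of `x² - 1` plus `r`, which is
`k + r + 1` for `x = (2A-1)·2^k ± 1`. Meanwhile `P_r - 1 = 2(P_{r-1}² - 1)` gains two factors of `2`
per step, so in `T_{2^r+δ}(x) - x = G_r + x (P_r - 1)` the second term vanishes modulo `2^{k+r+2}`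
once `r ≥ 2`.
-/

open Polynomial Polynomial.Chebyshev

namespace Polynomial.Chebyshev

variable (R : Type*) [CommRing R]

theorem T_two_mul (n : ℤ) : T R (2 * n) = 2 * T R n ^ 2 - 1 := by
  have h := T_mul_T R n n
  rw [sub_self, T_zero, ← two_mul] at h
  linear_combination -h

theorem T_two_mul_add_sub_T_mul_T_two_mul (n d : ℤ) :
    T R (2 * n + d) - T R d * T R (2 * n) = 2 * T R n * (T R (n + d) - T R d * T R n) := by
  have h := T_mul_T R n (n + d)
  rw [show n + (n + d) = 2 * n + d by ring, show n - (n + d) = -d by ring, T_neg] at h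
  linear_combination -h - T R d * T_two_mul R n

end Polynomial.Chebyshev

theorem odd_eval_T_of_odd {x : ℤ} (hx : Odd x) (n : ℤ) : Odd ((T ℤ n).eval x) := by
  have h := sub_dvd_eval_sub x 1 (T ℤ n)
  rw [T_eval_one] at h
  have h_even : Even ((T ℤ n).eval x - 1) :=
    even_iff_two_dvd.mpr ((hx.sub_odd odd_one).two_dvd.trans h)
  simpa using h_even.add_one

theorem two_pow_dvd_eval_T_two_pow_sub_one {x : ℤ} {k : ℕ} (hx : 2 ^ (k + 1) ∣ x ^ 2 - 1)
    {r : ℕ} (hr : 1 ≤ r) : 2 ^ (k + 2 * r) ∣ (T ℤ (2 ^ r)).eval x - 1 := by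
  induction r, hr using Nat.le_induction with
  | base =>
    rw [pow_one, T_two, pow_succ']
    simpa [show 2 * x ^ 2 - 1 - 1 = 2 * (x ^ 2 - 1) by ring] using mul_dvd_mul_left 2 hx
  | succ r hr ih =>
    set P := (T ℤ (2 ^ r)).eval x
    have hP : (T ℤ (2 ^ (r + 1))).eval x - 1 = (P - 1) * 2 * (P + 1) := by
      rw [pow_succ', T_two_mul]
      simp only [eval_sub, eval_mul, eval_pow, eval_one, eval_ofNat, P]
      ring
    have h_two_dvd : 2 ∣ P + 1 := by
      rw [show P + 1 = P - 1 + 2 by ring]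
      exact ((dvd_pow_self 2 (by omega)).trans ih).add dvd_rfl
    rw [hP, show k + 2 * (r + 1) = k + 2 * r + 1 + 1 by ring, pow_succ, pow_succ]
    exact mul_dvd_mul (mul_dvd_mul ih dvd_rfl) h_two_dvd

theorem exists_odd_eval_T_two_pow_add_sub_mul_eq {x u : ℤ} {k : ℕ} (hu : Odd u)
    (hx : x ^ 2 - 1 = 2 ^ (k + 1) * u) {δ : ℤ} (hδ : δ = 1 ∨ δ = -1) (r : ℕ) :
    ∃ v, Odd v ∧ (T ℤ (2 ^ r + δ)).eval x - x * (T ℤ (2 ^ r)).eval x = 2 ^ (k + r + 1) * v := by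
  have hx_odd : Odd x := by
    refine (Int.odd_pow' two_ne_zero).mp ⟨2 ^ k * u, ?_⟩
    linear_combination hx
  induction r with
  | zero =>
    rcases hδ with rfl | rfl
    · refine ⟨u, hu, ?_⟩
      simp only [pow_zero, Int.reduceAdd, T_two, T_one, eval_sub, eval_mul, eval_ofNat, eval_pow,
        eval_X, eval_one, add_zero]
      linear_combination hx
    · refine ⟨-u, hu.neg, ?_⟩
      simp only [pow_zero, Int.reduceNeg, add_neg_cancel, T_zero, T_one, eval_one, eval_X,
        add_zero]
      linear_combination -hx
  | succ r ih =>
    obtain ⟨v, hv, hG⟩ := ih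
    set P := (T ℤ (2 ^ r)).eval x
    have hTδ : (T ℤ δ).eval x = x := by rcases hδ with rfl | rfl <;> simp
    have h := congrArg (eval x) (T_two_mul_add_sub_T_mul_T_two_mul ℤ (2 ^ r) δ)
    simp only [eval_sub, eval_mul, eval_ofNat, hTδ, ← pow_succ'] at h
    refine ⟨P * v, (odd_eval_T_of_odd hx_odd _).mul hv, ?_⟩
    rw [h, hG]
    ring

theorem eval_T_two_pow_add_modEq {x u : ℤ} {k : ℕ} (hu : Odd u)
    (hx : x ^ 2 - 1 = 2 ^ (k + 1) * u) {δ : ℤ} (hδ : δ = 1 ∨ δ = -1) {r : ℕ} (hr : 2 ≤ r) :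
    (T ℤ (2 ^ r + δ)).eval x ≡ x + 2 ^ (k + r + 1) [ZMOD 2 ^ (k + r + 2)] := by
  obtain ⟨v, ⟨t, rfl⟩, hG⟩ := exists_odd_eval_T_two_pow_add_sub_mul_eq hu hx hδ r
  obtain ⟨b, hb⟩ : 2 ^ (k + r + 2) ∣ (T ℤ (2 ^ r)).eval x - 1 :=
    (pow_dvd_pow 2 (by omega)).trans (two_pow_dvd_eval_T_two_pow_sub_one ⟨u, hx⟩ (by omega))
  refine Int.modEq_iff_dvd.mpr ⟨-(t + x * b), ?_⟩
  linear_combination -hG - x * hb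

theorem exists_odd_sq_sub_one_eq {c ε : ℤ} {k : ℕ} (hc : Odd c) (hk : 2 ≤ k)
    (hε : ε = 1 ∨ ε = -1) : ∃ u, Odd u ∧ (c * 2 ^ k + ε) ^ 2 - 1 = 2 ^ (k + 1) * u := by
  obtain ⟨j, rfl⟩ := Nat.exists_eq_add_of_le hk
  have hε_odd : Odd ε := by rcases hε with rfl | rfl <;> decide
  refine ⟨c ^ 2 * 2 ^ (j + 1) + c * ε, ?_, ?_⟩
  · exact ((even_two.pow_of_ne_zero j.succ_ne_zero).mul_left _).add_odd (hc.mul hε_odd)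
  · rcases hε with rfl | rfl <;> ring

theorem chebyshev_two_pow_pm_one_at_X1_general (A k : ℕ) (hk : 2 ≤ k)
    (ε : ℤ) (hε : ε = 1 ∨ ε = -1) (r : ℕ) (hr : 2 ≤ r) :
    ((Polynomial.Chebyshev.T ℤ ((2 : ℤ) ^ r + 1)).eval ((2 * (A : ℤ) - 1) * 2 ^ k + ε) ≡
        ((2 * (A : ℤ) - 1) * 2 ^ k + ε) + 2 ^ (k + r + 1) [ZMOD 2 ^ (k + r + 2)]) ∧
    ((Polynomial.Chebyshev.T ℤ ((2 : ℤ) ^ r - 1)).eval ((2 * (A : ℤ) - 1) * 2 ^ k + ε) ≡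
        ((2 * (A : ℤ) - 1) * 2 ^ k + ε) + 2 ^ (k + r + 1) [ZMOD 2 ^ (k + r + 2)]) := by
  obtain ⟨u, hu, hx⟩ := exists_odd_sq_sub_one_eq (c := 2 * A - 1) ⟨A - 1, by ring⟩ hk hε
  refine ⟨eval_T_two_pow_add_modEq hu hx (Or.inl rfl) hr, ?_⟩
  rw [sub_eq_add_neg _ (1 : ℤ)]
  exact eval_T_two_pow_add_modEq hu hx (Or.inr rfl) hr

/-- Let `X₁ = (2A−1)·2^k ± 1` with `A ≥ 1`, `k ≥ 2`. Then for every `r ≥ 2`,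
`T_{2^r±1}(X₁) ≡ X₁ + 2^{k+r+1} (mod 2^{k+r+2})` for both choices of sign in the degree. -/
theorem chebyshev_two_pow_pm_one_at_X1 (A k : ℕ) (hA : 1 ≤ A) (hk : 2 ≤ k)
    (ε : ℤ) (hε : ε = 1 ∨ ε = -1) (r : ℕ) (hr : 2 ≤ r) :
    ((Polynomial.Chebyshev.T ℤ ((2 : ℤ) ^ r + 1)).eval ((2 * (A : ℤ) - 1) * 2 ^ k + ε) ≡
        ((2 * (A : ℤ) - 1) * 2 ^ k + ε) + 2 ^ (k + r + 1) [ZMOD 2 ^ (k + r + 2)]) ∧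
    ((Polynomial.Chebyshev.T ℤ ((2 : ℤ) ^ r - 1)).eval ((2 * (A : ℤ) - 1) * 2 ^ k + ε) ≡
        ((2 * (A : ℤ) - 1) * 2 ^ k + ε) + 2 ^ (k + r + 1) [ZMOD 2 ^ (k + r + 2)]) :=
  chebyshev_two_pow_pm_one_at_X1_general A k hk ε hε r hr
end

section
/- Let X₂ = (2A−1)·2^{k} with A, k natural numbers, k ≥ 1. Then for every natural number r ≥ 2, T_{2^r±1}(X₂) ≡ X₂ + 2^{k+r} (mod 2^{k+r+1}). -/
/-!
Write `x = m·2^k` with `m` odd and `k ≥ 1`, and let `δ = ±1`, so that `T_δ = X`. The product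
formula `2 T_a T_b = T_{a+b} + T_{a-b}` gives the two doubling rules
`T_{2n}(x) = 2 T_n(x)^2 - 1` and `T_{2n+δ}(x) = 2 T_{n+δ}(x) T_n(x) - x`.
The first shows that `T_{2^r}(x) ≡ 1` modulo a power of two growing like `2k + 2r`, so in the
second rule `T_{2^r}(x)` acts as `1` and the error `T_{2^r+δ}(x) - x ≡ 2^{k+r}` simply doubles
at each step. The case `r = 2`, i.e. `T_3` and `T_5`, is checked directly.
-/

open Polynomial Polynomial.Chebyshev

section Eval

variable {R : Type*} [CommRing R]

theorem T_eval_two_mul (n : ℤ) (x : R) :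
    (T R (2 * n)).eval x = 2 * (T R n).eval x ^ 2 - 1 := by
  simp [T_mul, T_two]

theorem T_eq_X_of_eq_one_or_neg_one {δ : ℤ} (hδ : δ = 1 ∨ δ = -1) : T R δ = X := by
  rcases hδ with rfl | rfl
  exacts [T_one R, T_neg_one R]

theorem T_eval_two_mul_add (n : ℤ) {δ : ℤ} (hδ : δ = 1 ∨ δ = -1) (x : R) :
    (T R (2 * n + δ)).eval x = 2 * (T R (n + δ)).eval x * (T R n).eval x - x := by
  have h := congrArg (eval x) (T_mul_T R (n + δ) n)
  rw [show n + δ + n = 2 * n + δ by ring, show n + δ - n = δ by ring,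
    T_eq_X_of_eq_one_or_neg_one hδ] at h
  simp only [eval_mul, eval_add, eval_X, eval_ofNat] at h
  linear_combination -h

theorem T_eval_three (x : R) : (T R 3).eval x = 4 * x ^ 3 - 3 * x := by
  rw [show (3 : ℤ) = 2 * 1 + 1 by norm_num, T_eval_two_mul_add 1 (Or.inl rfl), one_add_one_eq_two]
  simp only [T_two, T_one, eval_sub, eval_mul, eval_pow, eval_X, eval_ofNat, eval_one]
  ring

theorem T_eval_five (x : R) : (T R 5).eval x = 16 * x ^ 5 - 20 * x ^ 3 + 5 * x := by
  rw [show (5 : ℤ) = 2 * 2 + 1 by norm_num, T_eval_two_mul_add 2 (Or.inl rfl),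
    show (2 : ℤ) + 1 = 3 by norm_num, T_eval_three]
  simp only [T_two, eval_sub, eval_mul, eval_pow, eval_X, eval_ofNat, eval_one]
  ring

end Eval

theorem two_mul_sq_sub_one_modEq_one {a : ℤ} {e : ℕ} (he : 1 ≤ e) (h : a ≡ 1 [ZMOD 2 ^ e]) :
    2 * a ^ 2 - 1 ≡ 1 [ZMOD 2 ^ (e + 2)] := by
  obtain ⟨w, hw⟩ := Int.modEq_iff_dvd.mp h.symm
  obtain ⟨e, rfl⟩ := Nat.exists_eq_add_of_le' he
  refine (Int.modEq_iff_dvd.mpr ⟨w + 2 ^ e * w ^ 2, ?_⟩).symm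
  rw [eq_add_of_sub_eq hw]
  ring

theorem T_eval_two_pow_modEq_one {x : ℤ} {k : ℕ} (hx : 2 ^ k ∣ x) (r : ℕ) :
    (T ℤ (2 ^ (r + 2))).eval x ≡ 1 [ZMOD 2 ^ (2 * (k + r) + 3)] := by
  induction r with
  | zero =>
    obtain ⟨y, rfl⟩ := hx
    refine Int.modEq_iff_dvd.mpr ⟨-(y ^ 2 * ((2 ^ k * y) ^ 2 - 1)), ?_⟩
    rw [show (2 : ℤ) ^ (0 + 2) = 2 * 2 by norm_num, T_eval_two_mul]
    simp only [T_two, eval_sub, eval_mul, eval_pow, eval_X, eval_ofNat, eval_one]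
    ring
  | succ r ih =>
    rw [show (2 : ℤ) ^ (r + 1 + 2) = 2 * 2 ^ (r + 2) by ring, T_eval_two_mul,
      show 2 * (k + (r + 1)) + 3 = 2 * (k + r) + 3 + 2 by ring]
    exact two_mul_sq_sub_one_modEq_one (by omega) ih

theorem T_eval_two_pow_add_modEq {m : ℤ} (hm : Odd m) {k : ℕ} (hk : 1 ≤ k) {δ : ℤ}
    (hδ : δ = 1 ∨ δ = -1) {r : ℕ} (hr : 2 ≤ r) :
    (T ℤ (2 ^ r + δ)).eval (m * 2 ^ k) ≡ m * 2 ^ k + 2 ^ (k + r) [ZMOD 2 ^ (k + r + 1)] := by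
  set x := m * 2 ^ k with hx
  induction r, hr using Nat.le_induction with
  | base =>
    obtain ⟨t, rfl⟩ := hm
    obtain ⟨j, rfl⟩ := Nat.exists_eq_add_of_le' hk
    rcases hδ with rfl | rfl
    · refine (Int.modEq_iff_dvd.mpr ⟨2 ^ (4 * j + 5) * (2 * t + 1) ^ 5
        - 5 * 2 ^ (2 * j + 1) * (2 * t + 1) ^ 3 + t, ?_⟩).symm
      rw [show (2 : ℤ) ^ 2 + 1 = 5 by norm_num, T_eval_five, hx]
      ring
    · refine (Int.modEq_iff_dvd.mpr ⟨2 ^ (2 * j + 1) * (2 * t + 1) ^ 3 - (t + 1), ?_⟩).symm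
      rw [show (2 : ℤ) ^ 2 + -1 = 3 by norm_num, T_eval_three, hx]
      ring
  | succ r hr ih =>
    obtain ⟨s, rfl⟩ := Nat.exists_eq_add_of_le' hr
    have hb : (T ℤ (2 ^ (s + 2))).eval x ≡ 1 [ZMOD 2 ^ (k + (s + 2) + 1)] :=
      (T_eval_two_pow_modEq_one (Dvd.intro_left m rfl) s).of_dvd (pow_dvd_pow 2 (by omega))
    rw [show (2 : ℤ) ^ (s + 2 + 1) + δ = 2 * 2 ^ (s + 2) + δ by ring, T_eval_two_mul_add _ hδ,
      show k + (s + 2 + 1) + 1 = 1 + (k + (s + 2) + 1) by ring, pow_add, pow_one]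
    calc 2 * (T ℤ (2 ^ (s + 2) + δ)).eval x * (T ℤ (2 ^ (s + 2))).eval x - x
        ≡ 2 * (T ℤ (2 ^ (s + 2) + δ)).eval x - x [ZMOD 2 * 2 ^ (k + (s + 2) + 1)] := by
          rw [mul_right_comm]
          simpa only [mul_one] using
            ((hb.mul_left' (c := 2)).mul_right ((T ℤ (2 ^ (s + 2) + δ)).eval x)).sub_right x
      _ ≡ 2 * (x + 2 ^ (k + (s + 2))) - x [ZMOD 2 * 2 ^ (k + (s + 2) + 1)] :=
          (ih.mul_left' (c := 2)).sub_right x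
      _ = x + 2 ^ (k + (s + 2 + 1)) := by ring

theorem chebyshev_two_pow_pm_one_at_X2_general (A k : ℕ) (hk : 1 ≤ k)
    (r : ℕ) (hr : 2 ≤ r) (δ : ℤ) (hδ : δ = 1 ∨ δ = -1) :
    (Polynomial.Chebyshev.T ℤ ((2 : ℤ) ^ r + δ)).eval ((2 * (A : ℤ) - 1) * 2 ^ k) ≡
      (2 * (A : ℤ) - 1) * 2 ^ k + 2 ^ (k + r) [ZMOD 2 ^ (k + r + 1)] :=
  T_eval_two_pow_add_modEq ⟨A - 1, by ring⟩ hk hδ hr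

/-- Let `X₂ = (2A−1)·2^k` with `A ≥ 1`, `k ≥ 1`. Then for every `r ≥ 2`,
`T_{2^r±1}(X₂) ≡ X₂ + 2^{k+r} (mod 2^{k+r+1})` for both choices of sign in the degree. -/
theorem chebyshev_two_pow_pm_one_at_X2 (A k : ℕ) (hA : 1 ≤ A) (hk : 1 ≤ k)
    (r : ℕ) (hr : 2 ≤ r) (δ : ℤ) (hδ : δ = 1 ∨ δ = -1) :
    (Polynomial.Chebyshev.T ℤ ((2 : ℤ) ^ r + δ)).eval ((2 * (A : ℤ) - 1) * 2 ^ k) ≡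
      (2 * (A : ℤ) - 1) * 2 ^ k + 2 ^ (k + r) [ZMOD 2 ^ (k + r + 1)] :=
  chebyshev_two_pow_pm_one_at_X2_general A k hk r hr δ hδ
end

section
/- Let X₁ = (2A−1)·2^{k} ± 1 with A, k natural numbers, k ≥ 2, and let B be a natural number. Then for every natural number r ≥ 2, T_{(2B−1)·2^r ± 1}(X₁) ≡ X₁ + 2^{k+r+1} (mod 2^{k+r+2}). -/
/-!
Write `N = m * 2 ^ r` with `m` odd and `x ^ 2 - 1 = 2 ^ (k + 1) * u` with `u` odd, so that
`T_{N ± 1}(x) = x T_N(x) ± (x² - 1) U_{N-1}(x)`. Since `T_2(y)² - 1 = 4y²(y² - 1)`, every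
doubling of the index gains two factors of `2` in `T(x)² - 1`, whence
`T_N(x) ≡ 1 mod 2^(k + 2r)`. Since `U_{2s-1} = 2 T_s U_{s-1}` and `T_s(x)` is odd, `U_{N-1}(x)`
is `2 ^ r` times an odd number. For `r ≥ 2` this leaves
`T_{N ± 1}(x) ≡ x + 2^(k + r + 1) mod 2^(k + r + 2)`.
-/

open Polynomial Polynomial.Chebyshev

theorem Int.ModEq.polynomial_eval {n a b : ℤ} (p : ℤ[X]) (h : a ≡ b [ZMOD n]) :
    p.eval a ≡ p.eval b [ZMOD n] :=
  Int.modEq_of_dvd (h.dvd.trans (sub_dvd_eval_sub b a p))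

theorem Int.two_pow_mul_modEq_two_pow {w : ℤ} (hw : Odd w) (n : ℕ) :
    2 ^ n * w ≡ 2 ^ n [ZMOD 2 ^ (n + 1)] := by
  obtain ⟨t, rfl⟩ := hw
  exact Int.modEq_iff_dvd.mpr ⟨-t, by ring⟩

namespace Polynomial.Chebyshev

section

variable (R : Type*) [CommRing R]

theorem T_mul_U (m n : ℤ) : 2 * T R m * U R n = U R (n + m) + U R (n - m) := by
  induction m using Polynomial.Chebyshev.induct generalizing n with
  | zero => simp [two_mul]
  | one => rw [T_one, U_add_one, U_sub_one]; ring
  | add_two m ih1 ih2 =>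
    have h₁ := U_add_two R (n + m)
    have h₂ := U_sub_two R (n - m)
    linear_combination (norm := ring_nf)
      2 * U R n * T_add_two R m - h₂ - h₁ - ih2 n + 2 * (X : R[X]) * ih1 n
  | neg_add_one m ih1 ih2 =>
    have h₁ := U_add_two R (n + (-m - 1))
    have h₂ := U_sub_two R (n - (-m - 1))
    linear_combination (norm := ring_nf)
      2 * U R n * T_add_two R (-m - 1) - h₂ - h₁ - ih2 n + 2 * (X : R[X]) * ih1 n

theorem U_two_mul_sub_one (n : ℤ) : U R (2 * n - 1) = 2 * T R n * U R (n - 1) := by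
  rw [T_mul_U, sub_sub_cancel_left, U_neg_one, add_zero]; ring_nf

theorem T_add_one_eq_X_mul_T_add_U (n : ℤ) :
    T R (n + 1) = X * T R n + (X ^ 2 - 1) * U R (n - 1) := by
  have h := T_eq_X_mul_T_sub_pol_U R (n - 1)
  rw [sub_add_cancel, show n - 1 + 2 = n + 1 by ring] at h
  linear_combination h

theorem T_sub_one_eq_X_mul_T_sub_U (n : ℤ) :
    T R (n - 1) = X * T R n - (X ^ 2 - 1) * U R (n - 1) := by
  have h := T_mul_T R n 1
  rw [T_one] at h
  linear_combination -h - T_add_one_eq_X_mul_T_add_U R n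

theorem T_two_pow_succ_eval (y : R) (j : ℕ) :
    (T R (2 ^ (j + 1))).eval y = 2 * (T R (2 ^ j)).eval y ^ 2 - 1 := by
  rw [pow_succ' (2 : ℤ) j, T_mul, eval_comp, T_two]
  simp only [eval_sub, eval_mul, eval_ofNat, eval_pow, eval_X, eval_one]

end

theorem T_eval_odd {x : ℤ} (hx : Odd x) (n : ℤ) : Odd ((T ℤ n).eval x) := by
  have hx2 : x ≡ 1 [ZMOD 2] := Int.odd_iff.mp hx
  have h := hx2.polynomial_eval (T ℤ n)
  rw [T_eval_one] at h
  exact Int.odd_iff.mpr h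

theorem U_sub_one_eval_odd {x m : ℤ} (hx : Odd x) (hm : Odd m) :
    Odd ((U ℤ (m - 1)).eval x) := by
  have hx2 : x ≡ 1 [ZMOD 2] := Int.odd_iff.mp hx
  have h := hx2.polynomial_eval (U ℤ (m - 1))
  rw [U_eval_one, Int.cast_id, sub_add_cancel] at h
  have hm2 : m ≡ 1 [ZMOD 2] := Int.odd_iff.mp hm
  exact Int.odd_iff.mpr (h.trans hm2)

theorem U_mul_two_pow_sub_one_eval {x m : ℤ} (hx : Odd x) (hm : Odd m) (j : ℕ) :
    ∃ u, Odd u ∧ (U ℤ (m * 2 ^ j - 1)).eval x = 2 ^ j * u := by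
  induction j with
  | zero => exact ⟨_, U_sub_one_eval_odd hx hm, by simp⟩
  | succ j ih =>
    obtain ⟨u, hu, hUx⟩ := ih
    refine ⟨(T ℤ (m * 2 ^ j)).eval x * u, (T_eval_odd hx _).mul hu, ?_⟩
    rw [pow_succ, ← mul_assoc, mul_comm _ (2 : ℤ), U_two_mul_sub_one]
    simp only [eval_mul, eval_ofNat, hUx]
    ring

theorem sq_T_two_pow_eval_sub_one_dvd {y : ℤ} {s : ℕ} (h : 2 ^ s ∣ y ^ 2 - 1) (j : ℕ) :
    2 ^ (s + 2 * j) ∣ (T ℤ (2 ^ j)).eval y ^ 2 - 1 := by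
  induction j with
  | zero => simpa using h
  | succ j ih =>
    set z := (T ℤ (2 ^ j)).eval y
    have hz : (T ℤ (2 ^ (j + 1))).eval y ^ 2 - 1 = 2 ^ 2 * (z ^ 2 * (z ^ 2 - 1)) := by
      rw [T_two_pow_succ_eval]; ring
    rw [hz, show s + 2 * (j + 1) = 2 + (s + 2 * j) by ring, pow_add]
    exact mul_dvd_mul_left _ (ih.mul_left _)

theorem T_mul_two_pow_eval_modEq_one {y : ℤ} {s : ℕ} (h : 2 ^ s ∣ y ^ 2 - 1) (m : ℤ)
    (j : ℕ) :
    (T ℤ (m * 2 ^ (j + 1))).eval y ≡ 1 [ZMOD 2 ^ (s + 2 * j + 1)] := by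
  have hT2 : (T ℤ (2 ^ (j + 1))).eval y ≡ 1 [ZMOD 2 ^ (s + 2 * j + 1)] := by
    refine (Int.modEq_iff_dvd.mpr ?_).symm
    rw [T_two_pow_succ_eval, pow_succ', sub_sub, one_add_one_eq_two, ← mul_sub_one]
    exact mul_dvd_mul_left 2 (sq_T_two_pow_eval_sub_one_dvd h j)
  rw [T_mul, eval_comp, ← T_eval_one ℤ m]
  exact hT2.polynomial_eval (T ℤ m)

theorem T_add_eval_of_eq_one_or_neg_one {δ : ℤ} (hδ : δ = 1 ∨ δ = -1) (n x : ℤ) :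
    (T ℤ (n + δ)).eval x = x * (T ℤ n).eval x + δ * ((x ^ 2 - 1) * (U ℤ (n - 1)).eval x) := by
  rcases hδ with rfl | rfl
  · simp [T_add_one_eq_X_mul_T_add_U]
  · simp [← sub_eq_add_neg, T_sub_one_eq_X_mul_T_sub_U]

theorem T_mul_two_pow_add_eval_modEq {x u m δ : ℤ} {k r : ℕ}
    (hx : x ^ 2 - 1 = 2 ^ (k + 1) * u) (hu : Odd u) (hm : Odd m) (hδ : δ = 1 ∨ δ = -1)
    (hr : 2 ≤ r) :
    (T ℤ (m * 2 ^ r + δ)).eval x ≡ x + 2 ^ (k + r + 1) [ZMOD 2 ^ (k + r + 2)] := by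
  have hx_odd : Odd x := by
    have hx2 : Odd (x ^ 2) := ⟨2 ^ k * u, by linear_combination hx⟩
    exact Int.odd_pow.mp hx2 |>.resolve_right two_ne_zero
  have hδ_odd : Odd δ := by rcases hδ with rfl | rfl <;> decide
  obtain ⟨v, hv, hU⟩ := U_mul_two_pow_sub_one_eval hx_odd hm r
  obtain ⟨j, rfl⟩ : ∃ j, r = j + 1 := ⟨r - 1, by omega⟩
  have hT : (T ℤ (m * 2 ^ (j + 1))).eval x ≡ 1 [ZMOD 2 ^ (k + (j + 1) + 2)] :=
    (T_mul_two_pow_eval_modEq_one ⟨u, hx⟩ m j).of_dvd (pow_dvd_pow 2 (by omega))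
  have hUpart :
      (x ^ 2 - 1) * (U ℤ (m * 2 ^ (j + 1) - 1)).eval x = 2 ^ (k + (j + 1) + 1) * (u * v) := by
    rw [hx, hU]; ring
  rw [T_add_eval_of_eq_one_or_neg_one hδ, hUpart, mul_left_comm]
  simpa using (hT.mul_left x).add (Int.two_pow_mul_modEq_two_pow (hδ_odd.mul (hu.mul hv)) _)

end Polynomial.Chebyshev

theorem chebyshev_odd_deg_at_X1_general (A B k : ℕ) (hk : 2 ≤ k)
    (ε δ : ℤ) (hε : ε = 1 ∨ ε = -1) (hδ : δ = 1 ∨ δ = -1) (r : ℕ) (hr : 2 ≤ r) :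
    (Polynomial.Chebyshev.T ℤ ((2 * (B : ℤ) - 1) * 2 ^ r + δ)).eval
        ((2 * (A : ℤ) - 1) * 2 ^ k + ε) ≡
      ((2 * (A : ℤ) - 1) * 2 ^ k + ε) + 2 ^ (k + r + 1) [ZMOD 2 ^ (k + r + 2)] := by
  obtain ⟨k, rfl⟩ : ∃ k', k = k' + 1 := ⟨k - 1, by omega⟩
  have hx : ((2 * (A : ℤ) - 1) * 2 ^ (k + 1) + ε) ^ 2 - 1 =
      2 ^ (k + 1 + 1) * ((2 * A - 1) * ((2 * A - 1) * 2 ^ k + ε)) := by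
    rcases hε with rfl | rfl <;> ring
  have hε_odd : Odd ε := by rcases hε with rfl | rfl <;> decide
  have h2k_even : Even ((2 : ℤ) ^ k) := Int.even_pow.mpr ⟨even_two, by omega⟩
  have hA_odd : Odd (2 * (A : ℤ) - 1) := ⟨A - 1, by ring⟩
  exact T_mul_two_pow_add_eval_modEq hx (hA_odd.mul ((h2k_even.mul_left _).add_odd hε_odd))
    ⟨B - 1, by ring⟩ hδ hr

/-- Let `X₁ = (2A−1)·2^k ± 1` with `A, B ≥ 1`, `k ≥ 2`. Then for every `r ≥ 2`,
`T_{(2B−1)·2^r ± 1}(X₁) ≡ X₁ + 2^{k+r+1} (mod 2^{k+r+2})`. -/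
theorem chebyshev_odd_deg_at_X1 (A B k : ℕ) (hA : 1 ≤ A) (hB : 1 ≤ B) (hk : 2 ≤ k)
    (ε δ : ℤ) (hε : ε = 1 ∨ ε = -1) (hδ : δ = 1 ∨ δ = -1) (r : ℕ) (hr : 2 ≤ r) :
    (Polynomial.Chebyshev.T ℤ ((2 * (B : ℤ) - 1) * 2 ^ r + δ)).eval
        ((2 * (A : ℤ) - 1) * 2 ^ k + ε) ≡
      ((2 * (A : ℤ) - 1) * 2 ^ k + ε) + 2 ^ (k + r + 1) [ZMOD 2 ^ (k + r + 2)] :=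
  chebyshev_odd_deg_at_X1_general A B k hk ε δ hε hδ r hr
end

section
/- Let X₂ = (2A−1)·2^{k} with A, k, B natural numbers, k ≥ 1. Then for every natural number r ≥ 2, T_{(2B−1)·2^r ± 1}(X₂) ≡ X₂ + 2^{k+r} (mod 2^{k+r+1}). -/
/-!
Put `x = u·2^k` with `u` odd and `k ≥ 1`. Iterating `T_{2n} = 2T_n² − 1` from
`T_4(x) = 1 + 8x²(x² − 1)` gives `T_{2^j}(x) ≡ 1 (mod 2^{2k+j+1})` for `j ≥ 2`. Hence, by
`T_{a+s} + T_{a−s} = 2 T_a T_s` with `s = 2^r`, the values `T_{m·2^r+δ}(x)` form an arithmetic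
progression in `m` modulo `2^{k+r+1}`, so `T_{m·2^r+δ}(x) ≡ x + m (T_{2^r+δ}(x) − x)`. Taking
`m = 2` shows that `T_{2^r+δ}(x) − x` doubles with each step `r → r + 1`, starting from
`T_{4±1}(x) − x = 2^{k+2}·(odd)`; so it is `≡ 2^{k+r} (mod 2^{k+r+1})`, and an odd `m` keeps it so.
-/

open Polynomial Polynomial.Chebyshev

theorem eq_add_mul_sub_of_add_eq_two_mul {R : Type*} [CommRing R] {f : ℤ → R}
    (hf : ∀ j, f (j + 1) + f (j - 1) = 2 * f j) (j : ℤ) :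
    f j = f 0 + j * (f 1 - f 0) := by
  suffices h : ∀ j : ℤ, f j = f 0 + j * (f 1 - f 0) ∧ f (j + 1) = f 0 + (j + 1) * (f 1 - f 0) from
    (h j).1
  intro j
  induction j using Int.inductionOn' (b := 0) with
  | zero => simp
  | succ i _ ih =>
    refine ⟨by push_cast; exact ih.2, ?_⟩
    have h := hf (i + 1)
    rw [add_sub_cancel_right] at h
    push_cast
    linear_combination h + 2 * ih.2 - ih.1
  | pred i _ ih =>
    refine ⟨?_, by rw [sub_add_cancel]; push_cast; linear_combination ih.1⟩
    push_cast
    linear_combination hf i + 2 * ih.1 - ih.2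

theorem Int.odd_mul_two_pow_modEq {m : ℤ} (hm : Odd m) (n : ℕ) :
    m * 2 ^ n ≡ 2 ^ n [ZMOD 2 ^ (n + 1)] := by
  obtain ⟨t, rfl⟩ := hm
  exact Int.modEq_iff_dvd.2 ⟨-t, by ring⟩

namespace Polynomial.Chebyshev

theorem T_eq_X_of_eq_one_or_eq_neg_one (R : Type*) [CommRing R] {δ : ℤ} (hδ : δ = 1 ∨ δ = -1) :
    T R δ = X := by
  rcases hδ with rfl | rfl
  exacts [T_one R, T_neg_one R]

theorem T_mul_add_eval_of_T_eval_eq_one {R : Type*} [CommRing R] {x : R} {s : ℤ}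
    (hs : (T R s).eval x = 1) (m n : ℤ) :
    (T R (m * s + n)).eval x
      = (T R n).eval x + m * ((T R (s + n)).eval x - (T R n).eval x) := by
  have hrec (j : ℤ) : (T R ((j + 1) * s + n)).eval x + (T R ((j - 1) * s + n)).eval x
      = 2 * (T R (j * s + n)).eval x := by
    have h := congr_arg (eval x) (T_mul_T R (j * s + n) s)
    rw [eval_mul, eval_mul, hs, mul_one, eval_add, show j * s + n + s = (j + 1) * s + n by ring,
      show j * s + n - s = (j - 1) * s + n by ring] at h
    simpa using h.symm
  simpa using eq_add_mul_sub_of_add_eq_two_mul (f := fun j => (T R (j * s + n)).eval x) hrec m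

theorem T_mul_add_eval_modEq {x s M : ℤ} (hs : (T ℤ s).eval x ≡ 1 [ZMOD M]) (m n : ℤ) :
    (T ℤ (m * s + n)).eval x
      ≡ (T ℤ n).eval x + m * ((T ℤ (s + n)).eval x - (T ℤ n).eval x) [ZMOD M] := by
  have hcast (n : ℤ) : (((T ℤ n).eval x : ℤ) : ZMod M.natAbs)
      = (T (ZMod M.natAbs) n).eval (x : ZMod M.natAbs) := by
    simpa using algebraMap_eval_T (R' := ZMod M.natAbs) x n
  rw [← Int.modEq_natAbs, ← ZMod.intCast_eq_intCast_iff] at hs ⊢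
  push_cast [hcast] at hs ⊢
  exact T_mul_add_eval_of_T_eval_eq_one hs m n

theorem T_two_pow_eval_modEq_one (u : ℤ) (k : ℕ) {j : ℕ} (hj : 2 ≤ j) :
    (T ℤ (2 ^ j)).eval (u * 2 ^ k) ≡ 1 [ZMOD 2 ^ (2 * k + j + 1)] := by
  induction j, hj using Nat.le_induction with
  | base =>
    rw [show ((2 : ℤ) ^ 2) = 2 * 2 by norm_num, T_mul, eval_comp]
    simp only [T_two, eval_sub, eval_mul, eval_pow, eval_X, eval_ofNat, eval_one]
    exact (Int.modEq_iff_dvd.2 ⟨u ^ 2 * ((u * 2 ^ k) ^ 2 - 1), by ring⟩).symm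
  | succ j _ ih =>
    rw [pow_succ' (2 : ℤ) j, T_mul, eval_comp, T_two,
      show 2 * k + (j + 1) + 1 = (2 * k + j + 1) + 1 by ring, pow_succ']
    simp only [eval_sub, eval_mul, eval_pow, eval_X, eval_ofNat, eval_one]
    exact Int.two_mul_sq_sub_one_modEq_one ih

theorem T_four_add_eval_sub_modEq {u : ℤ} (hu : Odd u) {k : ℕ} (hk : 1 ≤ k) {δ : ℤ}
    (hδ : δ = 1 ∨ δ = -1) :
    (T ℤ (4 + δ)).eval (u * 2 ^ k) - u * 2 ^ k ≡ 2 ^ (k + 2) [ZMOD 2 ^ (k + 2 + 1)] := by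
  set x := u * 2 ^ k with hx
  have hT2 : (T ℤ 2).eval x = 2 * x ^ 2 - 1 := by simp [T_two]
  have hT3 : (T ℤ 3).eval x = 4 * x ^ 3 - 3 * x := by
    have h := congr_arg (eval x) (T_add_two ℤ 1)
    simp only [Int.reduceAdd, T_one, eval_sub, eval_mul, eval_ofNat, eval_X, hT2] at h
    linear_combination h
  have hT4 : (T ℤ 4).eval x = 2 * x * (4 * x ^ 3 - 3 * x) - (2 * x ^ 2 - 1) := by
    simpa [hT2, hT3] using congr_arg (eval x) (T_add_two ℤ 2)
  have hT5 : (T ℤ 5).eval x = 16 * x ^ 5 - 20 * x ^ 3 + 5 * x := by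
    have h := congr_arg (eval x) (T_add_two ℤ 3)
    simp only [Int.reduceAdd, eval_sub, eval_mul, eval_ofNat, eval_X, hT4, hT3] at h
    linear_combination h
  have hsq : Odd (x ^ 2 - 1) := by
    have hxeven : Even x := (Int.even_pow.2 ⟨even_two, by omega⟩).mul_left u
    exact (hxeven.pow_of_ne_zero two_ne_zero).sub_odd odd_one
  rcases hδ with rfl | rfl
  · rw [show (4 : ℤ) + 1 = 5 by norm_num, hT5, show 16 * x ^ 5 - 20 * x ^ 3 + 5 * x - x
      = u * ((x ^ 2 - 1) * (4 * x ^ 2 - 1)) * 2 ^ (k + 2) by rw [hx]; ring]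
    exact Int.odd_mul_two_pow_modEq (hu.mul (hsq.mul ⟨2 * x ^ 2 - 1, by ring⟩)) _
  · rw [show (4 : ℤ) + -1 = 3 by norm_num, hT3,
      show 4 * x ^ 3 - 3 * x - x = u * (x ^ 2 - 1) * 2 ^ (k + 2) by rw [hx]; ring]
    exact Int.odd_mul_two_pow_modEq (hu.mul hsq) _

theorem T_two_pow_add_eval_sub_modEq {u : ℤ} (hu : Odd u) {k : ℕ} (hk : 1 ≤ k) {δ : ℤ}
    (hδ : δ = 1 ∨ δ = -1) {r : ℕ} (hr : 2 ≤ r) :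
    (T ℤ (2 ^ r + δ)).eval (u * 2 ^ k) - u * 2 ^ k ≡ 2 ^ (k + r) [ZMOD 2 ^ (k + r + 1)] := by
  induction r, hr using Nat.le_induction with
  | base => simpa using T_four_add_eval_sub_modEq hu hk hδ
  | succ r hr ih =>
    have hs : (T ℤ (2 ^ r)).eval (u * 2 ^ k) ≡ 1 [ZMOD 2 ^ (k + (r + 1) + 1)] :=
      (T_two_pow_eval_modEq_one u k hr).of_dvd (pow_dvd_pow 2 (by omega))
    have hdouble := T_mul_add_eval_modEq hs 2 δ
    rw [T_eq_X_of_eq_one_or_eq_neg_one ℤ hδ, eval_X, ← pow_succ'] at hdouble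
    calc (T ℤ (2 ^ (r + 1) + δ)).eval (u * 2 ^ k) - u * 2 ^ k
        ≡ 2 * ((T ℤ (2 ^ r + δ)).eval (u * 2 ^ k) - u * 2 ^ k) [ZMOD 2 ^ (k + (r + 1) + 1)] := by
          simpa using hdouble.sub_right (u * 2 ^ k)
      _ ≡ 2 ^ (k + (r + 1)) [ZMOD 2 ^ (k + (r + 1) + 1)] := by
          simpa only [← pow_succ', add_assoc] using ih.mul_left' (c := 2)

end Polynomial.Chebyshev

theorem chebyshev_odd_deg_at_X2_general (A B k : ℕ) (hk : 1 ≤ k)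
    (δ : ℤ) (hδ : δ = 1 ∨ δ = -1) (r : ℕ) (hr : 2 ≤ r) :
    (Polynomial.Chebyshev.T ℤ ((2 * (B : ℤ) - 1) * 2 ^ r + δ)).eval
        ((2 * (A : ℤ) - 1) * 2 ^ k) ≡
      (2 * (A : ℤ) - 1) * 2 ^ k + 2 ^ (k + r) [ZMOD 2 ^ (k + r + 1)] := by
  set x : ℤ := (2 * (A : ℤ) - 1) * 2 ^ k
  have hu : Odd (2 * (A : ℤ) - 1) := ⟨A - 1, by ring⟩
  have hm : Odd (2 * (B : ℤ) - 1) := ⟨B - 1, by ring⟩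
  have hs : (T ℤ (2 ^ r)).eval x ≡ 1 [ZMOD 2 ^ (k + r + 1)] :=
    (T_two_pow_eval_modEq_one _ k hr).of_dvd (pow_dvd_pow 2 (by omega))
  have hprogression := T_mul_add_eval_modEq hs (2 * B - 1) δ
  rw [T_eq_X_of_eq_one_or_eq_neg_one ℤ hδ, eval_X] at hprogression
  calc _ ≡ x + (2 * B - 1) * ((T ℤ (2 ^ r + δ)).eval x - x) [ZMOD 2 ^ (k + r + 1)] :=
        hprogression
    _ ≡ x + (2 * B - 1) * 2 ^ (k + r) [ZMOD 2 ^ (k + r + 1)] :=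
        ((T_two_pow_add_eval_sub_modEq hu hk hδ hr).mul_left _).add_left _
    _ ≡ x + 2 ^ (k + r) [ZMOD 2 ^ (k + r + 1)] := (Int.odd_mul_two_pow_modEq hm _).add_left _

/-- Let `X₂ = (2A−1)·2^k` with `A, B ≥ 1`, `k ≥ 1`. Then for every `r ≥ 2`,
`T_{(2B−1)·2^r ± 1}(X₂) ≡ X₂ + 2^{k+r} (mod 2^{k+r+1})`. -/
theorem chebyshev_odd_deg_at_X2 (A B k : ℕ) (hA : 1 ≤ A) (hB : 1 ≤ B) (hk : 1 ≤ k)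
    (δ : ℤ) (hδ : δ = 1 ∨ δ = -1) (r : ℕ) (hr : 2 ≤ r) :
    (Polynomial.Chebyshev.T ℤ ((2 * (B : ℤ) - 1) * 2 ^ r + δ)).eval
        ((2 * (A : ℤ) - 1) * 2 ^ k) ≡
      (2 * (A : ℤ) - 1) * 2 ^ k + 2 ^ (k + r) [ZMOD 2 ^ (k + r + 1)] :=
  chebyshev_odd_deg_at_X2_general A B k hk δ hδ r hr
end

section
/- Let X₁ = (2A−1)·2^{k} ± 1 with A, k natural numbers, 2 ≤ k ≤ w−4, and set α = X₁ + √(X₁²−1) in the ring ℤ[√(X₁²−1)]. Then (α^{2^{w−k−1}} + α^{−2^{w−k−1}})/2 ≡ 1 (mod 2^w), and √(X₁²−1) · (α^{2^{w−k−1}} − α^{−2^{w−k−1}})/2 ≡ 0 (mod 2^w). -/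
lemma zsq_aux (d : ℤ) :
    ∀ (j : ℕ) (K L : ℕ) (β : ℤ√d),
      β.re ^ 2 - d * β.im ^ 2 = 1 →
      (2:ℤ) ^ K ∣ β.re - 1 → (2:ℤ) ^ L ∣ β.im →
      ((2:ℤ) ^ (K + j) ∣ (β ^ 2 ^ j).re - 1 ∧ (2:ℤ) ^ (L + j) ∣ (β ^ 2 ^ j).im) := by
  intro j
  induction j with
  | zero =>
      intro K L β h1 h2 h3
      simpa using ⟨h2, h3⟩
  | succ j ih =>
      intro K L β h1 h2 h3
      obtain ⟨c, hc⟩ := h2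
      obtain ⟨e, he⟩ := h3
      have hb : β ^ 2 ^ (j + 1) = (β * β) ^ 2 ^ j := by
        rw [← sq, ← pow_mul, ← pow_succ']
      have hre : (β * β).re = β.re * β.re + d * β.im * β.im := Zsqrtd.re_mul _ _
      have him : (β * β).im = β.re * β.im + β.im * β.re := Zsqrtd.im_mul _ _
      have hnorm' : (β * β).re ^ 2 - d * (β * β).im ^ 2 = 1 := by
        rw [hre, him]
        have : (β.re * β.re + d * β.im * β.im) ^ 2 -
            d * (β.re * β.im + β.im * β.re) ^ 2 =
            (β.re ^ 2 - d * β.im ^ 2) ^ 2 := by ring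
        rw [this, h1]; ring
      have hre1 : (β * β).re - 1 = 2 * (β.re - 1) * (β.re + 1) := by
        rw [hre]; linear_combination -h1
      have hre2 : (2:ℤ) ^ (K + 1) ∣ (β * β).re - 1 := by
        rw [hre1, hc]
        exact ⟨c * (β.re + 1), by ring⟩
      have him2 : (2:ℤ) ^ (L + 1) ∣ (β * β).im := by
        rw [him, he]
        exact ⟨β.re * e, by ring⟩
      have := ih (K + 1) (L + 1) (β * β) hnorm' hre2 him2
      rw [← hb] at this
      constructor
      · have h := this.1
        rwa [show K + 1 + j = K + (j + 1) by omega] at h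
      · have h := this.2
        rwa [show L + 1 + j = L + (j + 1) by omega] at h

/-- Let `X₁ = (2A−1)·2^k ± 1` with `A ≥ 1`, `2 ≤ k ≤ w−4`, and let
`α = X₁ + √(X₁²−1)` in `ℤ[√(X₁²−1)]` (so `α⁻¹ = star α` and
`(αⁿ + α⁻ⁿ)/2 = (αⁿ).re`, `(αⁿ − α⁻ⁿ)/2 = (αⁿ).im·√(X₁²−1)`). Then
`(α^{2^{w−k−1}} + α^{−2^{w−k−1}})/2 ≡ 1 (mod 2^w)` and
`√(X₁²−1)·(α^{2^{w−k−1}} − α^{−2^{w−k−1}})/2 ≡ 0 (mod 2^w)`. -/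
theorem zsqrtd_pow_two_pow_X1 (w A k : ℕ) (hA : 1 ≤ A) (hk : 2 ≤ k) (hw : 4 ≤ w)
    (hkw : k ≤ w - 4) (ε : ℤ) (hε : ε = 1 ∨ ε = -1) :
    ∀ X₁ : ℤ, X₁ = (2 * (A : ℤ) - 1) * 2 ^ k + ε →
    ∀ α : ℤ√(X₁ ^ 2 - 1), α = ⟨X₁, 1⟩ →
      ((α ^ 2 ^ (w - k - 1)).re ≡ 1 [ZMOD 2 ^ w]) ∧
      ((X₁ ^ 2 - 1) * (α ^ 2 ^ (w - k - 1)).im ≡ 0 [ZMOD 2 ^ w]) := by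
  intro X₁ hX α hα
  obtain ⟨k', rfl⟩ : ∃ k', k = k' + 2 := ⟨k - 2, by omega⟩
  obtain ⟨t, rfl⟩ : ∃ t, w = (k' + 2) + 4 + t := ⟨w - (k' + 2) - 4, by omega⟩
  have hε2 : ε ^ 2 = 1 := by rcases hε with h | h <;> simp [h]
  have hd : X₁ ^ 2 - 1 = 2 ^ (k' + 3) *
      ((2 * (A : ℤ) - 1) ^ 2 * 2 ^ (k' + 1) + ε * (2 * (A : ℤ) - 1)) := by
    subst hX
    have : ((2 * (A : ℤ) - 1) * 2 ^ (k' + 2) + ε) ^ 2 - 1 =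
        (2 * (A : ℤ) - 1) ^ 2 * 2 ^ (2 * k' + 4) +
          2 * ε * (2 * (A : ℤ) - 1) * 2 ^ (k' + 2) + (ε ^ 2 - 1) := by ring
    rw [this, hε2]
    ring
  have hre : (α * α).re = X₁ * X₁ + (X₁ ^ 2 - 1) * 1 * 1 := by
    rw [Zsqrtd.re_mul, hα]
  have him : (α * α).im = X₁ * 1 + 1 * X₁ := by
    rw [Zsqrtd.im_mul, hα]
  have hnorm : (α * α).re ^ 2 - (X₁ ^ 2 - 1) * (α * α).im ^ 2 = 1 := by
    rw [hre, him]; ring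
  have hre2 : (2:ℤ) ^ (k' + 4) ∣ (α * α).re - 1 := by
    rw [hre]
    have h2 : X₁ * X₁ + (X₁ ^ 2 - 1) * 1 * 1 - 1 = 2 * (X₁ ^ 2 - 1) := by ring
    rw [h2, hd]
    exact ⟨(2 * (A : ℤ) - 1) ^ 2 * 2 ^ (k' + 1) + ε * (2 * (A : ℤ) - 1), by ring⟩
  have him2 : (2:ℤ) ^ 1 ∣ (α * α).im := by
    rw [him]
    exact ⟨X₁, by ring⟩
  obtain ⟨hAre, hAim⟩ := zsq_aux (X₁ ^ 2 - 1) (t + 2) (k' + 4) 1 (α * α)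
    hnorm hre2 him2
  have hpow : α ^ 2 ^ ((k' + 2) + 4 + t - (k' + 2) - 1) = (α * α) ^ 2 ^ (t + 2) := by
    rw [show (k' + 2) + 4 + t - (k' + 2) - 1 = t + 3 by omega, ← sq, ← pow_mul,
      ← pow_succ']
  rw [hpow]
  constructor
  · have h : (2:ℤ) ^ ((k' + 2) + 4 + t) ∣ ((α * α) ^ 2 ^ (t + 2)).re - 1 := by
      rwa [show (k' + 2) + 4 + t = k' + 4 + (t + 2) by omega]
    exact (Int.modEq_iff_dvd.mpr (by simpa [neg_sub] using h.neg_right)).symm.symm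
  · refine Int.modEq_zero_iff_dvd.mpr ?_
    obtain ⟨e, he⟩ := hAim
    rw [he, hd]
    exact ⟨((2 * (A : ℤ) - 1) ^ 2 * 2 ^ (k' + 1) + ε * (2 * (A : ℤ) - 1)) * e,
      by ring⟩
end

section
/- Let X₂ = (2A−1)·2^{k} with A, k natural numbers, 1 ≤ k ≤ w−3, and set α = X₂ + √(X₂²−1) in ℤ[√(X₂²−1)]. Then α^{2^{w−k}} ≡ 1 (mod 2^w) in that ring; consequently (α^{2^{w−k}} + α^{−2^{w−k}})/2 ≡ 1 and (α^{2^{w−k}} − α^{−2^{w−k}})/2 ≡ 0 (mod 2^w). -/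
/-- Let `X₂ = (2A−1)·2^k` with `A ≥ 1`, `1 ≤ k ≤ w−3`, and let
`α = X₂ + √(X₂²−1)` in `ℤ[√(X₂²−1)]`. Then `α^{2^{w−k}} ≡ 1 (mod 2^w)` in that ring
(componentwise); consequently `(α^{2^{w−k}} + α^{−2^{w−k}})/2 ≡ 1` and
`(α^{2^{w−k}} − α^{−2^{w−k}})/2 ≡ 0 (mod 2^w)`. -/
theorem zsqrtd_pow_two_pow_X2 (w A k : ℕ) (hA : 1 ≤ A) (hk : 1 ≤ k) (hw : 3 ≤ w)
    (hkw : k ≤ w - 3) :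
    ∀ X₂ : ℤ, X₂ = (2 * (A : ℤ) - 1) * 2 ^ k →
    ∀ α : ℤ√(X₂ ^ 2 - 1), α = ⟨X₂, 1⟩ →
      ((α ^ 2 ^ (w - k)).re ≡ 1 [ZMOD 2 ^ w]) ∧
      ((α ^ 2 ^ (w - k)).im ≡ 0 [ZMOD 2 ^ w]) := by
  intro X₂ hX α hα
  subst hα
  set α : ℤ√(X₂ ^ 2 - 1) := ⟨X₂, 1⟩ with hα
  -- norm of α is 1, hence norm of α^n is 1
  have hnormα : Zsqrtd.norm α = 1 := by
    rw [Zsqrtd.norm_def]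
    show X₂ * X₂ - (X₂ ^ 2 - 1) * 1 * 1 = 1
    ring
  have hnorm : ∀ n : ℕ, (α ^ n).re * (α ^ n).re - (X₂ ^ 2 - 1) * ((α ^ n).im * (α ^ n).im) = 1 := by
    intro n
    have h1 : Zsqrtd.norm (α ^ n) = 1 := by
      induction n with
      | zero => simp [Zsqrtd.norm_def]
      | succ n ih =>
        simp only [pow_succ, Zsqrtd.norm_mul, ih, hnormα, one_mul, mul_one]
    rw [Zsqrtd.norm_def] at h1
    linarith [h1]
  -- squaring formulas
  have hsq_re : ∀ n : ℕ, (α ^ (2 * n)).re = 2 * (α ^ n).re ^ 2 - 1 := by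
    intro n
    have h2 : α ^ (2 * n) = α ^ n * α ^ n := by rw [two_mul, pow_add]
    rw [h2, Zsqrtd.re_mul]
    have := hnorm n
    nlinarith [this]
  have hsq_im : ∀ n : ℕ, (α ^ (2 * n)).im = 2 * (α ^ n).re * (α ^ n).im := by
    intro n
    have h2 : α ^ (2 * n) = α ^ n * α ^ n := by rw [two_mul, pow_add]
    rw [h2, Zsqrtd.im_mul]
    ring
  have hαre : α.re = X₂ := rfl
  have hαim : α.im = 1 := rfl
  -- main induction
  have main : ∀ m : ℕ, ((2:ℤ) ^ (2 * m + 2 * k + 3) ∣ (α ^ 2 ^ (m + 2)).re - 1) ∧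
      ((2:ℤ) ^ (m + k + 2) ∣ (α ^ 2 ^ (m + 2)).im) := by
    intro m
    induction m with
    | zero =>
      have h2re : (α ^ 2).re = 2 * X₂ ^ 2 - 1 := by
        have := hsq_re 1
        rw [pow_one, hαre] at this
        simpa using this
      have h2im : (α ^ 2).im = 2 * X₂ := by
        have := hsq_im 1
        rw [pow_one, hαre, hαim] at this
        simpa using this
      have h4 : α ^ 2 ^ (0 + 2) = α ^ (2 * 2) := by norm_num
      have h4re : (α ^ 2 ^ (0 + 2)).re = 2 * (2 * X₂ ^ 2 - 1) ^ 2 - 1 := by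
        rw [h4, hsq_re 2, h2re]
      have h4im : (α ^ 2 ^ (0 + 2)).im = 2 * (2 * X₂ ^ 2 - 1) * (2 * X₂) := by
        rw [h4, hsq_im 2, h2re, h2im]
      constructor
      · rw [h4re]
        have : 2 * (2 * X₂ ^ 2 - 1) ^ 2 - 1 - 1
            = 2 ^ (2 * 0 + 2 * k + 3) * ((2 * (A:ℤ) - 1) ^ 2 * (X₂ ^ 2 - 1)) := by
          rw [hX]; ring
        rw [this]
        exact dvd_mul_right _ _
      · rw [h4im]
        have : 2 * (2 * X₂ ^ 2 - 1) * (2 * X₂)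
            = 2 ^ (0 + k + 2) * ((2 * (A:ℤ) - 1) * (2 * X₂ ^ 2 - 1)) := by
          rw [hX]; ring
        rw [this]
        exact dvd_mul_right _ _
    | succ m ih =>
      obtain ⟨ihre, ihim⟩ := ih
      have hnext : α ^ 2 ^ (m + 1 + 2) = α ^ (2 * 2 ^ (m + 2)) := by
        congr 1
        rw [pow_succ]
        ring
      have hre2 : (α ^ 2 ^ (m + 1 + 2)).re = 2 * (α ^ 2 ^ (m + 2)).re ^ 2 - 1 := by
        rw [hnext, hsq_re]
      have him2 : (α ^ 2 ^ (m + 1 + 2)).im = 2 * (α ^ 2 ^ (m + 2)).re * (α ^ 2 ^ (m + 2)).im := by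
        rw [hnext, hsq_im]
      set r := (α ^ 2 ^ (m + 2)).re
      set i := (α ^ 2 ^ (m + 2)).im
      constructor
      · rw [hre2]
        have key : 2 * r ^ 2 - 1 - 1 = 2 * (r - 1) * (r + 1) := by ring
        rw [key]
        have h2 : (2:ℤ) ∣ r + 1 := by
          have h3 : (2:ℤ) ∣ r - 1 := dvd_trans (dvd_pow_self 2 (by omega)) ihre
          omega
        have hpow : (2:ℤ) ^ (2 * (m + 1) + 2 * k + 3) = 2 * 2 ^ (2 * m + 2 * k + 3) * 2 := by
          ring
        rw [hpow]
        exact mul_dvd_mul (mul_dvd_mul_left 2 ihre) h2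
      · rw [him2]
        have hpow : (2:ℤ) ^ (m + 1 + k + 2) = 2 ^ (m + k + 2) * 2 := by ring
        rw [hpow]
        have : 2 * r * i = 2 ^ (m+k+2) * 2 * (r * (i / 2 ^ (m+k+2))) := by
          obtain ⟨c, hc⟩ := ihim
          rw [hc]
          rw [Int.mul_ediv_cancel_left _ (by positivity)]
          ring
        rw [this]
        exact dvd_mul_right _ _
  -- conclude
  have hm := main (w - k - 2)
  have hwk : w - k - 2 + 2 = w - k := by omega
  rw [hwk] at hm
  obtain ⟨hre, him⟩ := hm
  constructor
  · have hle : w ≤ 2 * (w - k - 2) + 2 * k + 3 := by omega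
    have hdvd : (2:ℤ) ^ w ∣ (α ^ 2 ^ (w - k)).re - 1 := (pow_dvd_pow 2 hle).trans hre
    have h1 : ((2:ℤ) ^ w) ∣ 1 - (α ^ 2 ^ (w - k)).re := by
      simpa [neg_sub] using hdvd.neg_right
    exact Int.modEq_iff_dvd.mpr h1
  · have heq : w - k - 2 + k + 2 = w := by omega
    rw [heq] at him
    have h1 : ((2:ℤ) ^ w) ∣ 0 - (α ^ 2 ^ (w - k)).im := by simpa using him.neg_right
    exact Int.modEq_iff_dvd.mpr h1
end

section
/- Let p be an odd natural number and X₁ = (2A−1)·2^{k} ± 1 with A, k natural numbers, 2 ≤ k ≤ w−4. Then T_{p+2^{w−k−1}}(X₁) ≡ T_p(X₁) (mod 2^w), and moreover T_{p+2^{w−k−2}}(X₁) ≢ T_p(X₁) (mod 2^w); i.e., the degree period of Chebyshev polynomials at X₁ modulo 2^w is exactly 2^{w−k−1}. -/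
open Polynomial Polynomial.Chebyshev

namespace ChebPeriodAux

lemma T_add_one_formula (a : ℤ) :
    T ℤ (a + 1) = (X : ℤ[X]) * T ℤ a + (X ^ 2 - 1) * U ℤ (a - 1) := by
  linear_combination (norm := ring_nf) T_add_one ℤ a
    + (X : ℤ[X]) * T_eq_U_sub_X_mul_U ℤ a - T_eq_U_sub_X_mul_U ℤ (a - 1)
    + (X : ℤ[X]) * U_sub_two ℤ a

lemma U_add_formula (a : ℤ) : ∀ b : ℤ,
    U ℤ (a + b - 1) = T ℤ a * U ℤ (b - 1) + U ℤ (a - 1) * T ℤ b := by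
  intro b
  induction b using Polynomial.Chebyshev.induct with
  | zero => simp
  | one =>
      simp only [show a + 1 - 1 = a from by ring, show (1:ℤ) - 1 = 0 from by ring,
        U_zero, T_one, mul_one]
      linear_combination (norm := ring_nf) U_eq_X_mul_U_add_T ℤ (a - 1)
  | add_two n h1 h2 =>
      linear_combination (norm := ring_nf) U_add_two ℤ (a + n - 1)
        + 2 * (X : ℤ[X]) * h1 - h2
        - T ℤ a * U_add_two ℤ ((n : ℤ) - 1) - U ℤ (a - 1) * T_add_two ℤ (n : ℤ)
  | neg_add_one n h1 h2 =>
      linear_combination (norm := ring_nf) U_sub_two ℤ (a - n)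
        + 2 * (X : ℤ[X]) * h1 - h2
        - T ℤ a * U_sub_two ℤ (-(n : ℤ)) - U ℤ (a - 1) * T_sub_two ℤ (-(n : ℤ) + 1)

lemma T_add_formula (a : ℤ) : ∀ b : ℤ,
    T ℤ (a + b) = T ℤ a * T ℤ b + ((X : ℤ[X]) ^ 2 - 1) * U ℤ (a - 1) * U ℤ (b - 1) := by
  intro b
  induction b using Polynomial.Chebyshev.induct with
  | zero => simp
  | one =>
      simp only [show (1:ℤ) - 1 = 0 from by ring, U_zero, T_one, mul_one]
      linear_combination (norm := ring_nf) T_add_one_formula a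
  | add_two n h1 h2 =>
      linear_combination (norm := ring_nf) T_add_two ℤ (a + n)
        + 2 * (X : ℤ[X]) * h1 - h2
        - T ℤ a * T_add_two ℤ (n : ℤ)
        - ((X : ℤ[X]) ^ 2 - 1) * U ℤ (a - 1) * U_add_two ℤ ((n : ℤ) - 1)
  | neg_add_one n h1 h2 =>
      linear_combination (norm := ring_nf) T_sub_two ℤ (a - n + 1)
        + 2 * (X : ℤ[X]) * h1 - h2
        - T ℤ a * T_sub_two ℤ (-(n : ℤ) + 1)
        - ((X : ℤ[X]) ^ 2 - 1) * U ℤ (a - 1) * U_sub_two ℤ (-(n : ℤ))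

lemma T_diff_formula (a b : ℤ) :
    T ℤ (a + b) - T ℤ (a - b) = 2 * ((X : ℤ[X]) ^ 2 - 1) * U ℤ (a - 1) * U ℤ (b - 1) := by
  have h1 := T_add_formula a b
  have h2 := T_add_formula a (-b)
  rw [show a + -b = a - b from by ring, T_neg, U_neg_sub_one] at h2
  linear_combination (norm := ring_nf) h1 - h2

lemma T_eval_odd (x : ℤ) (hx : Odd x) : ∀ n : ℤ, Odd ((T ℤ n).eval x) := by
  intro n
  induction n using Polynomial.Chebyshev.induct with
  | zero => simp
  | one => simpa using hx
  | add_two n h1 h2 =>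
      rw [T_add_two]
      simp only [eval_sub, eval_mul, eval_ofNat, eval_X]
      exact (Even.mul_right (even_two_mul x) _).sub_odd h2
  | neg_add_one n h1 h2 =>
      rw [show -(n : ℤ) - 1 = (-(n:ℤ) + 1) - 2 from by ring, T_sub_two]
      simp only [eval_sub, eval_mul, eval_ofNat, eval_X]
      rw [show (-(n:ℤ) + 1 - 1) = -(n:ℤ) from by ring]
      exact (Even.mul_right (even_two_mul x) _).sub_odd h2

lemma U_eval_odd (x : ℤ) : ∀ n : ℤ, Even n → Odd ((U ℤ n).eval x) := by
  intro n
  induction n using Polynomial.Chebyshev.induct with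
  | zero => simp
  | one => intro h; exact absurd h (by decide)
  | add_two n h1 h2 =>
      intro h
      rw [U_add_two]
      simp only [eval_sub, eval_mul, eval_ofNat, eval_X]
      exact (Even.mul_right (even_two_mul x) _).sub_odd
        (h2 (by rcases h with ⟨r, hr⟩; exact ⟨r - 1, by omega⟩))
  | neg_add_one n h1 h2 =>
      intro h
      rw [show -(n : ℤ) - 1 = (-(n:ℤ) + 1) - 2 from by ring, U_sub_two]
      simp only [eval_sub, eval_mul, eval_ofNat, eval_X]
      rw [show (-(n:ℤ) + 1 - 1) = -(n:ℤ) from by ring]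
      exact (Even.mul_right (even_two_mul x) _).sub_odd
        (h2 (by rcases h with ⟨r, hr⟩; exact ⟨r + 1, by omega⟩))

lemma U_pow_val (x : ℤ) (hx : Odd x) :
    ∀ t : ℕ, ∃ c : ℤ, Odd c ∧ (U ℤ ((2:ℤ) ^ t - 1)).eval x = 2 ^ t * c := by
  intro t
  induction t with
  | zero => exact ⟨1, odd_one, by simp⟩
  | succ t ih =>
      obtain ⟨c, hodd, hc⟩ := ih
      have h := U_add_formula ((2:ℤ)^t) ((2:ℤ)^t)
      rw [show (2:ℤ)^t + (2:ℤ)^t = (2:ℤ)^(t+1) from by ring] at h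
      have h2 := congrArg (eval x) h
      simp only [eval_add, eval_mul] at h2
      refine ⟨(T ℤ ((2:ℤ)^t)).eval x * c, (T_eval_odd x hx _).mul hodd, ?_⟩
      rw [h2, hc]; ring

lemma key (x : ℤ) (hx : Odd x) (K : ℕ) (e : ℤ) (he : Odd e)
    (hd : x ^ 2 - 1 = 2 ^ (K + 1) * e) (p : ℕ) (hp : Odd p) (t : ℕ) (ht : 1 ≤ t) :
    ∃ c : ℤ, Odd c ∧
      (T ℤ ((p:ℤ) + 2 ^ (t+1))).eval x - (T ℤ (p:ℤ)).eval x = 2 ^ (K + t + 2) * c := by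
  obtain ⟨c, hcodd, hc⟩ := U_pow_val x hx t
  have hdiff := T_diff_formula ((p:ℤ) + 2 ^ t) ((2:ℤ) ^ t)
  rw [show ((p:ℤ) + 2 ^ t) + 2 ^ t = (p:ℤ) + 2 ^ (t+1) from by ring,
    show ((p:ℤ) + 2 ^ t) - 2 ^ t = (p:ℤ) from by ring] at hdiff
  have h2 := congrArg (eval x) hdiff
  simp only [eval_sub, eval_mul, eval_pow, eval_one, eval_X, eval_ofNat] at h2
  have hev : Even ((p:ℤ) + 2 ^ t - 1) := by
    obtain ⟨r, hr⟩ := hp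
    have hr' : (p:ℤ) = 2 * r + 1 := by exact_mod_cast hr
    have h2t : (2:ℤ) ^ t = 2 * 2 ^ (t - 1) := by
      rw [← pow_succ']; congr 1; omega
    exact ⟨(r:ℤ) + 2 ^ (t-1), by rw [h2t, hr']; ring⟩
  obtain ⟨uodd⟩ : ∃ _ : Odd ((U ℤ ((p:ℤ) + 2 ^ t - 1)).eval x), True :=
    ⟨U_eval_odd x _ hev, trivial⟩
  refine ⟨e * (U ℤ ((p:ℤ) + 2 ^ t - 1)).eval x * c, (he.mul uodd).mul hcodd, ?_⟩
  rw [h2, hd, hc]; ring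

lemma main_half (x : ℤ) (hx : Odd x) (K : ℕ) (e : ℤ) (he : Odd e)
    (hd : x ^ 2 - 1 = 2 ^ (K + 1) * e) (p : ℕ) (hp : Odd p) (m w : ℕ)
    (hm : 1 ≤ m) (hwm : w = K + m + 3) (h1 : w - K - 1 = m + 2) (h2 : w - K - 2 = m + 1) :
    ((T ℤ ((p : ℤ) + 2 ^ (w - K - 1))).eval x ≡ (T ℤ (p : ℤ)).eval x [ZMOD 2 ^ w] ∧
     ¬ ((T ℤ ((p : ℤ) + 2 ^ (w - K - 2))).eval x ≡ (T ℤ (p : ℤ)).eval x [ZMOD 2 ^ w])) := by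
  constructor
  · rw [h1, Int.modEq_iff_dvd]
    obtain ⟨c, hcodd, hc⟩ := key x hx K e he hd p hp (m + 1) (by omega)
    refine ⟨-c, ?_⟩
    have : (2:ℤ) ^ w = 2 ^ (K + (m+1) + 2) := by rw [hwm]; ring_nf
    rw [this]
    linarith [hc]
  · rw [h2, Int.modEq_iff_dvd]
    obtain ⟨c, hcodd, hc⟩ := key x hx K e he hd p hp m hm
    intro hdvd
    have hw' : (2:ℤ) ^ w = 2 ^ (K + m + 2) * 2 := by
      rw [hwm, ← pow_succ]
    rw [hw'] at hdvd
    rw [show (T ℤ (p:ℤ)).eval x - (T ℤ ((p:ℤ) + 2 ^ (m+1))).eval x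
        = 2 ^ (K + m + 2) * (-c) from by linarith [hc]] at hdvd
    have h2c : (2:ℤ) ∣ -c :=
      (mul_dvd_mul_iff_left (a := (2:ℤ) ^ (K + m + 2)) (pow_ne_zero _ two_ne_zero)).mp hdvd
    obtain ⟨r, hr⟩ := hcodd
    obtain ⟨s, hs⟩ := h2c
    omega

end ChebPeriodAux


/-- Let `p` be odd and `X₁ = (2A−1)·2^k ± 1` with `A ≥ 1`, `2 ≤ k ≤ w−4`. Then
`T_{p+2^{w−k−1}}(X₁) ≡ T_p(X₁) (mod 2^w)` but
`T_{p+2^{w−k−2}}(X₁) ≢ T_p(X₁) (mod 2^w)`: the degree period at `X₁` is exactly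
`2^{w−k−1}`. -/
theorem chebyshev_degree_period_X1 (w A k p : ℕ) (hA : 1 ≤ A) (hk : 2 ≤ k)
    (hw : 4 ≤ w) (hkw : k ≤ w - 4) (hp : Odd p) :
    ((Polynomial.Chebyshev.T ℤ ((p : ℤ) + 2 ^ (w - k - 1))).eval
        ((2 * (A : ℤ) - 1) * 2 ^ k + 1) ≡
      (Polynomial.Chebyshev.T ℤ (p : ℤ)).eval ((2 * (A : ℤ) - 1) * 2 ^ k + 1)
        [ZMOD 2 ^ w] ∧
     ¬ ((Polynomial.Chebyshev.T ℤ ((p : ℤ) + 2 ^ (w - k - 2))).eval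
        ((2 * (A : ℤ) - 1) * 2 ^ k + 1) ≡
      (Polynomial.Chebyshev.T ℤ (p : ℤ)).eval ((2 * (A : ℤ) - 1) * 2 ^ k + 1)
        [ZMOD 2 ^ w])) ∧
    ((Polynomial.Chebyshev.T ℤ ((p : ℤ) + 2 ^ (w - k - 1))).eval
        ((2 * (A : ℤ) - 1) * 2 ^ k - 1) ≡
      (Polynomial.Chebyshev.T ℤ (p : ℤ)).eval ((2 * (A : ℤ) - 1) * 2 ^ k - 1)
        [ZMOD 2 ^ w] ∧
     ¬ ((Polynomial.Chebyshev.T ℤ ((p : ℤ) + 2 ^ (w - k - 2))).eval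
        ((2 * (A : ℤ) - 1) * 2 ^ k - 1) ≡
      (Polynomial.Chebyshev.T ℤ (p : ℤ)).eval ((2 * (A : ℤ) - 1) * 2 ^ k - 1)
        [ZMOD 2 ^ w])) := by

  obtain ⟨k1, rfl⟩ : ∃ k1, k = k1 + 2 := ⟨k - 2, by omega⟩
  have hc_odd : Odd (2 * (A:ℤ) - 1) := ⟨(A:ℤ) - 1, by ring⟩
  obtain ⟨m, hm1, hmw⟩ : ∃ m, 1 ≤ m ∧ w = (k1 + 2) + m + 3 := ⟨w - k1 - 5, by omega, by omega⟩
  constructor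
  · exact ChebPeriodAux.main_half _ ⟨(2*(A:ℤ)-1) * 2^(k1+1), by ring⟩ (k1+2)
      ((2*(A:ℤ)-1) * ((2*(A:ℤ)-1) * 2^(k1+1) + 1))
      (hc_odd.mul ⟨(2*(A:ℤ)-1) * 2^k1, by ring⟩) (by ring) p hp m w hm1 hmw
      (by omega) (by omega)
  · exact ChebPeriodAux.main_half _ ⟨(2*(A:ℤ)-1) * 2^(k1+1) - 1, by ring⟩ (k1+2)
      ((2*(A:ℤ)-1) * ((2*(A:ℤ)-1) * 2^(k1+1) - 1))
      (hc_odd.mul ⟨(2*(A:ℤ)-1) * 2^k1 - 1, by ring⟩) (by ring) p hp m w hm1 hmw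
      (by omega) (by omega)
end

section
/- Let F : ℤ/2^wℤ → ℤ/2^wℤ be induced by a permutation polynomial over ℤ/2^wℤ. For all integers j, all x̄, ȳ ∈ ℤ, and every natural number m ≤ w: if ȳ ≡ F^j(x̄) (mod 2^m), then there exists a natural number l ≤ m such that ȳ ≡ F^{j+2^l}(x̄) (mod 2^m). -/
/-- The castHom between `ZMod`s is surjective. -/
lemma castHom_surj {N n : ℕ} [NeZero n] (h : n ∣ N) :
    Function.Surjective (ZMod.castHom h (ZMod n)) := by
  intro t
  obtain ⟨k, rfl⟩ := ZMod.natCast_zmod_surjective (n := n) t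
  exact ⟨(k : ZMod N), by simp [map_natCast]⟩

/-- Fiber lemma: two elements of `ZMod (2^(m+1))` with equal casts in `ZMod (2^m)`
differ by `0` or `2^m`. -/
lemma fiber_two {m : ℕ} (a b : ZMod (2 ^ (m + 1)))
    (h : ZMod.castHom (pow_dvd_pow 2 (Nat.le_succ m)) (ZMod (2 ^ m)) b =
         ZMod.castHom (pow_dvd_pow 2 (Nat.le_succ m)) (ZMod (2 ^ m)) a) :
    b = a ∨ b = a + (2 ^ m : ℕ) := by
  haveI : NeZero ((2:ℕ) ^ (m + 1)) := ⟨pow_ne_zero _ two_ne_zero⟩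
  haveI : NeZero ((2:ℕ) ^ m) := ⟨pow_ne_zero _ two_ne_zero⟩
  set d : ZMod (2 ^ (m + 1)) := b - a with hd
  have hd0 : ZMod.castHom (pow_dvd_pow 2 (Nat.le_succ m)) (ZMod (2 ^ m)) d = 0 := by
    rw [hd, map_sub, h, sub_self]
  have hval : ((d.val : ℕ) : ZMod (2 ^ m)) = 0 := by
    rw [ZMod.natCast_val]; exact hd0
  have hdvd : (2 : ℕ) ^ m ∣ d.val := (ZMod.natCast_eq_zero_iff _ _).mp hval
  have hlt : d.val < 2 ^ (m + 1) := ZMod.val_lt d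
  obtain ⟨c, hc⟩ := hdvd
  have hc2 : c < 2 := by
    by_contra hc2
    push_neg at hc2
    have : 2 ^ (m + 1) ≤ d.val := by
      rw [hc, pow_succ]
      exact Nat.mul_le_mul_left _ hc2
    omega
  have hdval : d = ((d.val : ℕ) : ZMod (2 ^ (m + 1))) := by
    rw [ZMod.natCast_val, ZMod.cast_id]
  interval_cases c
  · left
    have : d = 0 := by rw [hdval, hc]; simp
    rw [hd] at this
    linear_combination this
  · right
    have : d = ((2 ^ m : ℕ) : ZMod (2 ^ (m + 1))) := by rw [hdval, hc]; simp
    rw [hd] at this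
    linear_combination this

/-- Key lemma: for a bijective polynomial map on `ZMod (2^w)`, every point is
periodic mod `2^m` with period `2^l` for some `l ≤ m`. -/
lemma key_lemma (w : ℕ) (F : Equiv.Perm (ZMod (2 ^ w)))
    (P : Polynomial (ZMod (2 ^ w))) (hP : ∀ x, F x = P.eval x) :
    ∀ m : ℕ, ∀ hm : m ≤ w, ∀ z : ZMod (2 ^ w), ∃ l : ℕ, l ≤ m ∧
      ZMod.castHom (pow_dvd_pow 2 hm) (ZMod (2 ^ m)) (F^[2 ^ l] z) =
        ZMod.castHom (pow_dvd_pow 2 hm) (ZMod (2 ^ m)) z := by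
  intro m
  induction m with
  | zero =>
    intro hm z
    refine ⟨0, le_rfl, ?_⟩
    haveI : Subsingleton (ZMod (2 ^ 0)) := by
      rw [pow_zero]; infer_instance
    exact Subsingleton.elim _ _
  | succ m ih =>
    intro hm z
    have hm' : m ≤ w := le_trans (Nat.le_succ m) hm
    obtain ⟨l, hl, hlz⟩ := ih hm' z
    -- notation for the cast maps
    set π1 := ZMod.castHom (pow_dvd_pow 2 hm) (ZMod (2 ^ (m + 1))) with hπ1
    set π0 := ZMod.castHom (pow_dvd_pow 2 hm') (ZMod (2 ^ m)) with hπ0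
    set π := ZMod.castHom (pow_dvd_pow 2 (Nat.le_succ m)) (ZMod (2 ^ m)) with hπ
    have hcomp : ∀ u : ZMod (2 ^ w), π (π1 u) = π0 u := by
      intro u
      have := ZMod.castHom_comp (pow_dvd_pow 2 (Nat.le_succ m)) (pow_dvd_pow 2 hm)
      calc π (π1 u) = (π.comp π1) u := rfl
        _ = π0 u := by rw [hπ, hπ1, this, hπ0]
    -- induced maps
    set G : ZMod (2 ^ (m + 1)) → ZMod (2 ^ (m + 1)) := fun t => (P.map π1).eval t with hG
    set G0 : ZMod (2 ^ m) → ZMod (2 ^ m) := fun t => (P.map π0).eval t with hG0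
    have hscG : Function.Semiconj π1 F G := by
      intro u
      simp only [hG, hP u, Polynomial.eval_map, Polynomial.eval₂_at_apply]
    have hscG0 : Function.Semiconj π0 F G0 := by
      intro u
      simp only [hG0, hP u, Polynomial.eval_map, Polynomial.eval₂_at_apply]
    have hitG : ∀ n u, π1 (F^[n] u) = G^[n] (π1 u) := fun n u =>
      (hscG.iterate_right n) u
    have hitG0 : ∀ n u, π0 (F^[n] u) = G0^[n] (π0 u) := fun n u =>
      (hscG0.iterate_right n) u
    -- G is injective
    haveI : NeZero ((2:ℕ) ^ (m + 1)) := ⟨pow_ne_zero _ two_ne_zero⟩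
    have hGsurj : Function.Surjective G := by
      intro t
      obtain ⟨s, rfl⟩ := castHom_surj (pow_dvd_pow 2 hm) t
      exact ⟨π1 (F.symm s), by rw [← hscG (F.symm s), Equiv.apply_symm_apply]⟩
    have hGinj : Function.Injective G := (Finite.injective_iff_surjective).mpr hGsurj
    -- mod 2^m periodicity with period 2^l
    have hG0per : G0^[2 ^ l] (π0 z) = π0 z := by rw [← hitG0, hlz]
    -- decide whether already periodic mod 2^(m+1)
    by_cases hcase : π1 (F^[2 ^ l] z) = π1 z
    · exact ⟨l, le_trans hl (Nat.le_succ m), hcase⟩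
    · refine ⟨l + 1, Nat.succ_le_succ hl, ?_⟩
      set a := π1 z with ha
      set b := π1 (F^[2 ^ l] z) with hb
      -- cast of b down to ZMod 2^m equals cast of a
      have hπba : π b = π a := by
        rw [hb, ha, hcomp, hcomp, hlz]
      have hbfib := fiber_two a b hπba
      have hbne : b ≠ a := hcase
      have hbval : b = a + ((2 ^ m : ℕ) : ZMod (2 ^ (m + 1))) := by
        rcases hbfib with h' | h'
        · exact absurd h' hbne
        · exact h'
      -- c = π1 (F^[2^(l+1)] z)
      set c := π1 (F^[2 ^ (l + 1)] z) with hc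
      have hπca : π c = π a := by
        rw [hc, ha, hcomp, hcomp]
        have : π0 (F^[2 ^ (l + 1)] z) = π0 z := by
          have h2 : (2:ℕ) ^ (l + 1) = 2 ^ l + 2 ^ l := by rw [pow_succ]; ring
          rw [hitG0, h2, Function.iterate_add_apply, hG0per, hG0per]
        exact this
      have hcfib := fiber_two a c hπca
      -- G^[2^l] b = c
      have hGb : G^[2 ^ l] b = c := by
        have h2 : (2:ℕ) ^ (l + 1) = 2 ^ l + 2 ^ l := by rw [pow_succ]; ring
        rw [hb, hc, ← hitG, ← Function.iterate_add_apply, ← h2, hitG]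
      have hGa : G^[2 ^ l] a = b := by rw [ha, ← hitG]
      rcases hcfib with h' | h'
      · -- c = a: done
        exact h'
      · -- c = a + 2^m = b: contradiction with injectivity
        exfalso
        have hcb : c = b := by rw [h', hbval]
        have heq : G^[2 ^ l] b = G^[2 ^ l] a := by rw [hGb, hGa, hcb]
        exact hbne ((hGinj.iterate (2 ^ l)) heq)

/-- Let `F` be a bijective polynomial map on `ℤ/2^wℤ`. For every integer `j`, all
`x y : ℤ/2^wℤ` and every `m ≤ w`: if `y ≡ F^j(x) (mod 2^m)` (i.e. their images in
`ℤ/2^mℤ` agree), then there exists `l ≤ m` with `y ≡ F^{j+2^l}(x) (mod 2^m)`. -/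
theorem perm_poly_iterate_period (w : ℕ) (F : Equiv.Perm (ZMod (2 ^ w)))
    (hpoly : ∃ P : Polynomial (ZMod (2 ^ w)), ∀ x, F x = P.eval x)
    (j : ℤ) (x y : ZMod (2 ^ w)) (m : ℕ) (hm : m ≤ w)
    (h : ZMod.castHom (pow_dvd_pow 2 hm) (ZMod (2 ^ m)) y =
      ZMod.castHom (pow_dvd_pow 2 hm) (ZMod (2 ^ m)) ((F ^ j) x)) :
    ∃ l : ℕ, l ≤ m ∧
      ZMod.castHom (pow_dvd_pow 2 hm) (ZMod (2 ^ m)) y =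
        ZMod.castHom (pow_dvd_pow 2 hm) (ZMod (2 ^ m)) ((F ^ (j + 2 ^ l)) x) := by
  obtain ⟨P, hP⟩ := hpoly
  obtain ⟨l, hl, hlz⟩ := key_lemma w F P hP m hm ((F ^ j) x)
  refine ⟨l, hl, ?_⟩
  have hiter : (F ^ (j + 2 ^ l)) x = F^[2 ^ l] ((F ^ j) x) := by
    rw [Equiv.Perm.iterate_eq_pow]
    have : (2 : ℤ) ^ l = ((2 ^ l : ℕ) : ℤ) := by push_cast; ring
    rw [add_comm, this, zpow_add, zpow_natCast, Equiv.Perm.mul_apply]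
  rw [hiter, hlz, ← h]
end
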